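/- arXiv:1412.0441 — 4 statements merged into one kernel-verified Lean document; each statement's English description precedes it below -/
import Mathlib

section
/- Let (X, 𝒜) be a measurable space, let m be a σ-finite measure on X, and let μ₁, μ₂, μ₃ be finite signed measures on X with Lebesgue decompositions μᵢ = ρᵢ·m + μᵢˢ, where ρᵢ is the Radon–Nikodym density of the absolutely continuous part with respect to m and μᵢˢ is mutually singular with m. If for every λ ∈ ℝ the signed measure λ²μ₁ + 2λμ₂ + μ₃ is nonnegative (i.e. assigns nonnegative mass to every measurable set), then the singular parts μ₁ˢ and μ₃ˢ are nonnegative, and the densities satisfy ρ₂² ≤ ρ₁·ρ₃ m-almost everywhere. -/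
/-!
A nonnegative signed measure has zero negative Jordan part, so its singular part and its density
are nonnegative. Evaluating the hypothesis on a set gives a nonnegative real quadratic, whose
leading and constant coefficients are therefore nonnegative: this handles `μ₁` and `μ₃`. For the
densities, linearity of `rnDeriv` makes `λ² ρ₁ + 2λ ρ₂ + ρ₃` nonnegative almost everywhere for each
`λ`; intersecting over rational `λ` and passing to real `λ` by continuity, the discriminant
condition gives `ρ₂² ≤ ρ₁ ρ₃` almost everywhere.
-/

open MeasureTheory

lemma sq_le_mul_of_forall_quadratic_nonneg {a b c : ℝ}
    (h : ∀ x : ℝ, 0 ≤ x ^ 2 * a + 2 * x * b + c) : b ^ 2 ≤ a * c := by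
  have hd := discrim_le_zero (a := a) (b := 2 * b) (c := c) fun x => by linarith [h x]
  rw [discrim] at hd
  linarith

lemma nonneg_of_forall_quadratic_nonneg {a b c : ℝ}
    (h : ∀ x : ℝ, 0 ≤ x ^ 2 * a + 2 * x * b + c) : 0 ≤ a := by
  nlinarith [sq_le_mul_of_forall_quadratic_nonneg h, h 0, h 1, h (-1), sq_nonneg b]

lemma forall_quadratic_nonneg_of_forall_rat {a b c : ℝ}
    (h : ∀ q : ℚ, 0 ≤ (q : ℝ) ^ 2 * a + 2 * q * b + c) (x : ℝ) :
    0 ≤ x ^ 2 * a + 2 * x * b + c :=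
  Rat.denseRange_cast.induction_on x (isClosed_le continuous_const (by fun_prop)) h

namespace MeasureTheory.SignedMeasure

variable {X : Type*} [MeasurableSpace X] {s : SignedMeasure X}

lemma toJordanDecomposition_negPart_eq_zero_of_nonneg (hs : 0 ≤ s) :
    s.toJordanDecomposition.negPart = 0 := by
  set ν := s.toMeasureOfZeroLE Set.univ MeasurableSet.univ
    ((VectorMeasure.le_restrict_univ_iff_le _ _).2 hs)
  have hν : s = (⟨ν, 0, .zero_right⟩ : JordanDecomposition X).toSignedMeasure := by
    simp [JordanDecomposition.toSignedMeasure, ν, toMeasureOfZeroLE_toSignedMeasure]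
  rw [toJordanDecomposition_eq hν]

lemma singularPart_nonneg_of_nonneg (m : Measure X) (hs : 0 ≤ s) :
    0 ≤ s.singularPart m := by
  simp only [singularPart, toJordanDecomposition_negPart_eq_zero_of_nonneg hs,
    Measure.singularPart_zero, Measure.toSignedMeasure_zero, sub_zero]
  exact Measure.zero_le_toSignedMeasure _

lemma rnDeriv_nonneg_ae_of_nonneg (m : Measure X) (hs : 0 ≤ s) :
    0 ≤ᵐ[m] s.rnDeriv m := by
  have hneg : s.toJordanDecomposition.negPart.rnDeriv m =ᵐ[m] 0 := by
    rw [toJordanDecomposition_negPart_eq_zero_of_nonneg hs]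
    exact Measure.rnDeriv_zero m
  filter_upwards [hneg] with x hx
  simp [rnDeriv_def, hx]

lemma rnDeriv_smul_add_smul_add (m : Measure X) [SigmaFinite m] (s t u : SignedMeasure X)
    (a b : ℝ) :
    (a • s + b • t + u).rnDeriv m =ᵐ[m] a • s.rnDeriv m + b • t.rnDeriv m + u.rnDeriv m := by
  filter_upwards [rnDeriv_add (a • s + b • t) u m, rnDeriv_add (a • s) (b • t) m,
    rnDeriv_smul s m a, rnDeriv_smul t m b] with x h₁ h₂ h₃ h₄
  simp only [Pi.add_apply] at h₁ h₂ ⊢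
  rw [h₁, h₂, h₃, h₄]

end MeasureTheory.SignedMeasure

/-- **Lemma 3.1 (quadratic measure lemma).** If `λ² μ₁ + 2λ μ₂ + μ₃ ≥ 0` for every
`λ ∈ ℝ`, then the singular parts of `μ₁` and `μ₃` (with respect to a σ-finite
measure `m`) are nonnegative, and the Radon–Nikodym densities satisfy
`ρ₂² ≤ ρ₁ ρ₃` `m`-almost everywhere. -/
theorem quadratic_signedMeasure_lemma
    {X : Type*} [MeasurableSpace X] (m : Measure X) [SigmaFinite m]
    (μ₁ μ₂ μ₃ : SignedMeasure X)
    (h : ∀ lam : ℝ, 0 ≤ lam ^ 2 • μ₁ + (2 * lam) • μ₂ + μ₃) :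
    0 ≤ μ₁.singularPart m ∧ 0 ≤ μ₃.singularPart m ∧
      ∀ᵐ x ∂m, (μ₂.rnDeriv m x) ^ 2 ≤ μ₁.rnDeriv m x * μ₃.rnDeriv m x := by
  have hset : ∀ A, MeasurableSet A → ∀ lam : ℝ, 0 ≤ lam ^ 2 * μ₁ A + 2 * lam * μ₂ A + μ₃ A :=
    fun A hA lam => by simpa using VectorMeasure.le_iff.mp (h lam) A hA
  have hμ₁ : 0 ≤ μ₁ :=
    VectorMeasure.le_iff.mpr fun A hA => nonneg_of_forall_quadratic_nonneg (hset A hA)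
  have hμ₃ : 0 ≤ μ₃ := by simpa using h 0
  refine ⟨μ₁.singularPart_nonneg_of_nonneg m hμ₁, μ₃.singularPart_nonneg_of_nonneg m hμ₃, ?_⟩
  have hdensity : ∀ q : ℚ, ∀ᵐ x ∂m,
      0 ≤ (q : ℝ) ^ 2 * μ₁.rnDeriv m x + 2 * q * μ₂.rnDeriv m x + μ₃.rnDeriv m x := fun q => by
    filter_upwards [SignedMeasure.rnDeriv_nonneg_ae_of_nonneg m (h q),
      SignedMeasure.rnDeriv_smul_add_smul_add m μ₁ μ₂ μ₃ ((q : ℝ) ^ 2) (2 * q)] with x hx hx'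
    simpa [hx', mul_assoc] using hx
  filter_upwards [ae_all_iff.mpr hdensity] with x hx
  exact sq_le_mul_of_forall_quadratic_nonneg (forall_quadratic_nonneg_of_forall_rat hx)
end

section
/- Let (X, 𝒜) be a measurable space and let μ₁, μ₂, μ₃ be finite signed measures on X such that for every λ ∈ ℝ the signed measure λ²μ₁ + 2λμ₂ + μ₃ is nonnegative. Then for every bounded measurable function φ : X → ℝ and every measurable set A one has ∫_A φ² dμ₁ + 2∫_A φ dμ₂ + μ₃(A) ≥ 0. -/
/-!
All three measures have densities `f₁, f₂, f₃` with respect to the finite measure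
`ν = |μ₁| + |μ₂| + |μ₃|`. The hypothesis for a fixed `λ` says that
`λ² f₁ + 2λ f₂ + f₃ ≥ 0` holds `ν`-a.e.; intersecting over countably many `λ` and using continuity
in `λ`, a single null set works for all real `λ` simultaneously. Substituting `λ = φ x`
pointwise and integrating over `A` gives the claim, once the Jordan-decomposition integral
against `ν.withDensityᵥ f` is identified with `∫_A g f dν`.
-/

open MeasureTheory

/-- Integral of a real-valued function on a measurable set `A` against a finite
signed measure, defined via the Jordan decomposition. -/
noncomputable def SignedMeasure.integralOn {X : Type*} [MeasurableSpace X]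
    (μ : SignedMeasure X) (A : Set X) (f : X → ℝ) : ℝ :=
  (∫ x in A, f x ∂μ.toJordanDecomposition.posPart) -
    (∫ x in A, f x ∂μ.toJordanDecomposition.negPart)

namespace MeasureTheory

variable {X : Type*} [MeasurableSpace X]

theorem ae_forall_of_isClosed {T : Type*} [TopologicalSpace T]
    [TopologicalSpace.SeparableSpace T] {μ : Measure X} {P : T → X → Prop}
    (hP : ∀ x, IsClosed {t | P t x}) (h : ∀ t, ∀ᵐ x ∂μ, P t x) : ∀ᵐ x ∂μ, ∀ t, P t x := by
  obtain ⟨D, hD, hDense⟩ := TopologicalSpace.exists_countable_dense T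
  filter_upwards [(ae_ball_iff hD).2 fun t _ => h t] with x hx t
  have hsub : D ⊆ {t | P t x} := fun t ht => hx t ht
  exact closure_minimal hsub (hP x) (hDense.closure_eq ▸ Set.mem_univ t)

theorem ae_nonneg_of_withDensityᵥ_nonneg {ν : Measure X} {f : X → ℝ} (hf : Integrable f ν)
    (h : 0 ≤ ν.withDensityᵥ f) : 0 ≤ᵐ[ν] f := by
  refine ae_nonneg_of_forall_setIntegral_nonneg hf fun s hs _ => ?_
  simpa [withDensityᵥ_apply hf hs] using VectorMeasure.le_iff.mp h s hs

theorem SignedMeasure.withDensityᵥ_rnDeriv_eq_of_totalVariation_le (s : SignedMeasure X)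
    {ν : Measure X} [SigmaFinite ν] (hs : s.totalVariation ≤ ν) :
    ν.withDensityᵥ (s.rnDeriv ν) = s := by
  refine s.withDensityᵥ_rnDeriv_eq ν ((s.absolutelyContinuous_ennreal_iff _).2 ?_)
  rw [VectorMeasure.ennrealToMeasure_toENNRealVectorMeasure]
  exact Measure.absolutelyContinuous_of_le hs

theorem setIntegral_quadratic_nonneg {ν : Measure X} {f₁ f₂ f₃ : X → ℝ}
    (hf₁ : Integrable f₁ ν) (hf₂ : Integrable f₂ ν) (hf₃ : Integrable f₃ ν)
    (h : ∀ t : ℝ, 0 ≤ t ^ 2 • ν.withDensityᵥ f₁ + (2 * t) • ν.withDensityᵥ f₂ + ν.withDensityᵥ f₃)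
    {φ : X → ℝ} (hφ : Measurable φ) {C : ℝ} (hφC : ∀ x, ‖φ x‖ ≤ C) (A : Set X) :
    0 ≤ (∫ x in A, φ x ^ 2 * f₁ x ∂ν) + 2 * (∫ x in A, φ x * f₂ x ∂ν) + ∫ x in A, f₃ x ∂ν := by
  have hquad : ∀ t : ℝ, 0 ≤ᵐ[ν] fun x => t ^ 2 * f₁ x + 2 * t * f₂ x + f₃ x := fun t => by
    refine ae_nonneg_of_withDensityᵥ_nonneg (((hf₁.const_mul _).add (hf₂.const_mul _)).add hf₃) ?_
    have ht := h t
    rwa [← withDensityᵥ_smul, ← withDensityᵥ_smul, ← withDensityᵥ_add (hf₁.smul _) (hf₂.smul _),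
      ← withDensityᵥ_add ((hf₁.smul _).add (hf₂.smul _)) hf₃] at ht
  have hquad_forall : ∀ᵐ x ∂ν, ∀ t : ℝ, 0 ≤ t ^ 2 * f₁ x + 2 * t * f₂ x + f₃ x :=
    ae_forall_of_isClosed (fun x => isClosed_le continuous_const (by fun_prop)) hquad
  have hi₁ : Integrable (fun x => φ x ^ 2 * f₁ x) (ν.restrict A) :=
    hf₁.restrict.bdd_mul (hφ.pow_const 2).aestronglyMeasurable (.of_forall fun x => by
      simpa only [norm_pow] using pow_le_pow_left₀ (norm_nonneg _) (hφC x) 2)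
  have hi₂ : Integrable (fun x => φ x * f₂ x) (ν.restrict A) :=
    hf₂.restrict.bdd_mul hφ.aestronglyMeasurable (.of_forall hφC)
  calc 0 ≤ ∫ x in A, φ x ^ 2 * f₁ x + 2 * (φ x * f₂ x) + f₃ x ∂ν :=
        integral_nonneg_of_ae <| ae_restrict_of_ae <| hquad_forall.mono fun x hx => by
          have := hx (φ x)
          dsimp only [Pi.zero_apply]
          linarith
    _ = _ := by
      rw [integral_add (f := fun x => φ x ^ 2 * f₁ x + 2 * (φ x * f₂ x))
          (hi₁.add (hi₂.const_mul 2)) hf₃.restrict,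
        integral_add hi₁ (hi₂.const_mul 2), integral_const_mul]

end MeasureTheory

namespace SignedMeasure

variable {X : Type*} [MeasurableSpace X]

theorem integralOn_eq_of_eq_toSignedMeasure_sub (μ : SignedMeasure X) (p n : Measure X)
    [IsFiniteMeasure p] [IsFiniteMeasure n] (hμ : μ = p.toSignedMeasure - n.toSignedMeasure)
    (A : Set X) {g : X → ℝ} (hg : Measurable g) {C : ℝ} (hgC : ∀ x, ‖g x‖ ≤ C) :
    integralOn μ A g = (∫ x in A, g x ∂p) - ∫ x in A, g x ∂n := by
  set j := μ.toJordanDecomposition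
  have hadd : p + j.negPart = j.posPart + n := by
    rw [← Measure.toSignedMeasure_eq_toSignedMeasure_iff, Measure.toSignedMeasure_add,
      Measure.toSignedMeasure_add, ← sub_eq_sub_iff_add_eq_add, ← hμ,
      ← μ.toSignedMeasure_toJordanDecomposition]
    rfl
  have hint : ∀ (m : Measure X) [IsFiniteMeasure m], Integrable g (m.restrict A) := fun m _ =>
    .of_bound hg.aestronglyMeasurable C (.of_forall hgC)
  have := congrArg (fun m => ∫ x in A, g x ∂m) hadd
  simp only [Measure.restrict_add, integral_add_measure (hint _) (hint _)] at this
  rw [integralOn]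
  linarith

theorem integralOn_withDensityᵥ {ν : Measure X} {f : X → ℝ} (hf : Integrable f ν) (A : Set X)
    (hA : MeasurableSet A) {g : X → ℝ} (hg : Measurable g) {C : ℝ} (hgC : ∀ x, ‖g x‖ ≤ C) :
    integralOn (ν.withDensityᵥ f) A g = ∫ x in A, g x * f x ∂ν := by
  have := isFiniteMeasure_withDensity_ofReal hf.2
  have := isFiniteMeasure_withDensity_ofReal hf.neg.2
  rw [integralOn_eq_of_eq_toSignedMeasure_sub _ _ _
    (withDensityᵥ_eq_withDensity_pos_part_sub_withDensity_neg_part hf) A hg hgC]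
  have hpart : ∀ F : X → ℝ, Integrable F ν →
      ∫ x in A, g x ∂ν.withDensity (fun x => ENNReal.ofReal (F x)) =
        ∫ x in A, g x * max (F x) 0 ∂ν := fun F hF => by
    rw [setIntegral_withDensity_eq_setIntegral_toReal_smul₀
      hF.aemeasurable.ennreal_ofReal.restrict (.of_forall fun _ => ENNReal.ofReal_lt_top) g hA]
    simp only [ENNReal.toReal_ofReal', smul_eq_mul, mul_comm]
  have hint : ∀ F : X → ℝ, Integrable F ν → Integrable (fun x => g x * F x) (ν.restrict A) :=
    fun F hF => hF.restrict.bdd_mul hg.aestronglyMeasurable (.of_forall hgC)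
  rw [hpart f hf, hpart (fun x => -f x) hf.neg,
    ← integral_sub (hint _ hf.pos_part) (hint _ hf.neg_part)]
  refine integral_congr_ae (.of_forall fun x => ?_)
  rcases le_total 0 (f x) with hx | hx <;> simp [hx]

end SignedMeasure

/-- **Localization of the quadratic hypothesis.** If `λ² μ₁ + 2λ μ₂ + μ₃ ≥ 0` for every
`λ ∈ ℝ`, then for every bounded measurable `φ : X → ℝ` and every measurable set `A`,
`∫_A φ² dμ₁ + 2 ∫_A φ dμ₂ + μ₃(A) ≥ 0`. -/
theorem quadratic_signedMeasure_localization
    {X : Type*} [MeasurableSpace X] (μ₁ μ₂ μ₃ : SignedMeasure X)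
    (h : ∀ lam : ℝ, 0 ≤ lam ^ 2 • μ₁ + (2 * lam) • μ₂ + μ₃) :
    ∀ (φ : X → ℝ), Measurable φ → (∃ C : ℝ, ∀ x, |φ x| ≤ C) →
      ∀ (A : Set X), MeasurableSet A →
        0 ≤ SignedMeasure.integralOn μ₁ A (fun x => φ x ^ 2) +
            2 * SignedMeasure.integralOn μ₂ A φ + μ₃ A := by
  rintro φ hφ ⟨C, hφC⟩ A hA
  set ν := μ₁.totalVariation + μ₂.totalVariation + μ₃.totalVariation
  have hν₁ : μ₁.totalVariation ≤ ν := Measure.le_add_right (Measure.le_add_right le_rfl)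
  have hν₂ : μ₂.totalVariation ≤ ν := Measure.le_add_right (Measure.le_add_left le_rfl)
  have hν₃ : μ₃.totalVariation ≤ ν := Measure.le_add_left le_rfl
  have hφ_norm : ∀ x, ‖φ x‖ ≤ C := by simpa only [Real.norm_eq_abs] using hφC
  have hφ_sq_norm : ∀ x, ‖φ x ^ 2‖ ≤ C ^ 2 := fun x => by
    simpa only [norm_pow] using pow_le_pow_left₀ (norm_nonneg _) (hφ_norm x) 2
  rw [← μ₁.withDensityᵥ_rnDeriv_eq_of_totalVariation_le hν₁,
    ← μ₂.withDensityᵥ_rnDeriv_eq_of_totalVariation_le hν₂,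
    ← μ₃.withDensityᵥ_rnDeriv_eq_of_totalVariation_le hν₃] at h ⊢
  rw [SignedMeasure.integralOn_withDensityᵥ (μ₁.integrable_rnDeriv ν) A hA (hφ.pow_const 2)
      hφ_sq_norm,
    SignedMeasure.integralOn_withDensityᵥ (μ₂.integrable_rnDeriv ν) A hA hφ hφ_norm,
    withDensityᵥ_apply (μ₃.integrable_rnDeriv ν) hA]
  exact setIntegral_quadratic_nonneg (μ₁.integrable_rnDeriv ν) (μ₂.integrable_rnDeriv ν)
    (μ₃.integrable_rnDeriv ν) h hφ hφ_norm A
end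

section
/- Let n ≥ 1 be a natural number, let N be a real number with N > n, let d be a real number, and let M and H be n×n real matrices. Then 2·trace(Mᵀ H) − ‖M‖_F² + (d − tr M)²/N ≤ ‖H‖_F² + (tr H − d)²/(N − n). -/
/-!
Put `A = M - H`. Expanding `‖A‖_F² = ‖H‖_F² - 2⟨M, H⟩_F + ‖M‖_F²` reduces the claim
to `(tr M - d)²/N ≤ ‖A‖_F² + (tr H - d)²/(N - n)`. Since `tr M - d = tr A + (tr H - d)`
and `N = n + (N - n)`, this is the weighted Cauchy–Schwarz inequality
`(x + y)²/(p + q) ≤ x²/p + y²/q` combined with `(tr A)² ≤ n ‖A‖_F²`.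
-/

open Matrix

theorem add_sq_div_add_le {K : Type*} [Field K] [LinearOrder K] [IsStrictOrderedRing K]
    {x y p q s : K} (hp : 0 ≤ p) (hq : 0 < q) (hs : 0 ≤ s)
    (hx : x ^ 2 ≤ p * s) : (x + y) ^ 2 / (p + q) ≤ s + y ^ 2 / q := by
  rcases hp.eq_or_lt with rfl | hp
  · have hx0 : x = 0 := by nlinarith
    simp [hx0, hs]
  rw [add_div' _ _ _ hq.ne', div_le_div_iff₀ (by positivity) hq]
  -- multiplied by `p`, the cross term is `(q x - p y)² + q² (p s - x²) ≥ 0`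
  have hcross : 0 ≤ q ^ 2 * s + p * y ^ 2 - 2 * q * x * y := by
    refine nonneg_of_mul_nonneg_right ?_ hp
    nlinarith [sq_nonneg (q * x - p * y), mul_le_mul_of_nonneg_left hx (sq_nonneg q)]
  nlinarith [mul_le_mul_of_nonneg_left hx hq.le]

namespace Matrix

variable {n R : Type*} [Fintype n]

theorem trace_transpose_mul_self_eq_sum_sq [Semiring R] (A : Matrix n n R) :
    trace (Aᵀ * A) = ∑ i, ∑ j, A j i ^ 2 := by
  simp only [trace, diag, mul_apply, transpose_apply, sq]

theorem trace_transpose_sub_mul_sub [CommRing R] (M H : Matrix n n R) :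
    trace ((M - H)ᵀ * (M - H)) = trace (Mᵀ * M) - 2 * trace (Mᵀ * H) + trace (Hᵀ * H) := by
  have hcross : trace (Hᵀ * M) = trace (Mᵀ * H) := by
    rw [← trace_transpose, transpose_mul, transpose_transpose]
  simp only [transpose_sub, sub_mul, mul_sub, trace_sub, hcross]
  ring

variable [CommRing R] [LinearOrder R] [IsStrictOrderedRing R]

theorem trace_transpose_mul_self_nonneg (A : Matrix n n R) : 0 ≤ trace (Aᵀ * A) := by
  rw [trace_transpose_mul_self_eq_sum_sq]
  positivity

theorem trace_sq_le_card_mul_trace_transpose_mul_self (A : Matrix n n R) :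
    trace A ^ 2 ≤ Fintype.card n * trace (Aᵀ * A) := by
  have hdiag : ∑ i, A i i ^ 2 ≤ trace (Aᵀ * A) := by
    rw [trace_transpose_mul_self_eq_sum_sq]
    exact Finset.sum_le_sum fun i _ =>
      Finset.single_le_sum (f := fun j => A j i ^ 2) (fun j _ => sq_nonneg _) (Finset.mem_univ i)
  calc trace A ^ 2 ≤ Fintype.card n * ∑ i, A i i ^ 2 := sq_sum_le_card_mul_sum_sq
    _ ≤ Fintype.card n * trace (Aᵀ * A) := by gcongr

end Matrix

theorem matrix_self_improvement_general (n : ℕ) (N : ℝ) (hN : (n : ℝ) < N)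
    (d : ℝ) (M H : Matrix (Fin n) (Fin n) ℝ) :
    2 * trace (Mᵀ * H) - trace (Mᵀ * M) + (d - trace M) ^ 2 / N ≤
      trace (Hᵀ * H) + (trace H - d) ^ 2 / (N - (n : ℝ)) := by
  have hCS : trace (M - H) ^ 2 ≤ n * trace ((M - H)ᵀ * (M - H)) := by
    simpa using trace_sq_le_card_mul_trace_transpose_mul_self (M - H)
  have key := add_sq_div_add_le (y := trace H - d) n.cast_nonneg (sub_pos.2 hN)
    (trace_transpose_mul_self_nonneg _) hCS
  rw [trace_sub, sub_add_sub_cancel, add_sub_cancel, ← neg_sub, neg_sq,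
    trace_transpose_sub_mul_sub] at key
  linarith

/-- **Matrix self-improvement inequality.** For `n × n` real matrices `M, H` (`n ≥ 1`),
a real `N > n` and a real `d`:
`2 ⟨M, H⟩_F − ‖M‖_F² + (d − tr M)²/N ≤ ‖H‖_F² + (tr H − d)²/(N − n)`. -/
theorem matrix_self_improvement (n : ℕ) (hn : 1 ≤ n) (N : ℝ) (hN : (n : ℝ) < N)
    (d : ℝ) (M H : Matrix (Fin n) (Fin n) ℝ) :
    2 * trace (Mᵀ * H) - trace (Mᵀ * M) + (d - trace M) ^ 2 / N ≤
      trace (Hᵀ * H) + (trace H - d) ^ 2 / (N - (n : ℝ)) :=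
  matrix_self_improvement_general n N hN d M H
end

section
/- Let n ≥ 1 be a natural number, let N be a real number with N > n, let d be a real number, and let H be an n×n real matrix. Then for M := H + ((tr H − d)/(N − n))·I, where I is the n×n identity matrix, equality holds: 2·trace(Mᵀ H) − ‖M‖_F² + (d − tr M)²/N = ‖H‖_F² + (tr H − d)²/(N − n). -/
/-! With `c = (tr H - d)/(N - n)` we have `M - H = c • 1` and `d - tr M = -c N`, so by
polarization the left side is `‖H‖_F² - c² n + c² N = ‖H‖_F² + c² (N - n)`. -/

open Matrix

section

variable {R : Type*} [CommRing R] {m n : Type*} [Fintype m] [Fintype n]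

theorem two_mul_trace_transpose_mul_sub_trace_transpose_mul (M H : Matrix m n R) :
    2 * trace (Mᵀ * H) - trace (Mᵀ * M) = trace (Hᵀ * H) - trace ((M - H)ᵀ * (M - H)) := by
  have hsymm : trace (Hᵀ * M) = trace (Mᵀ * H) := by
    rw [← trace_transpose, transpose_mul, transpose_transpose]
  rw [transpose_sub, Matrix.sub_mul, Matrix.mul_sub, Matrix.mul_sub, trace_sub, trace_sub, trace_sub,
    hsymm]
  ring

theorem trace_transpose_mul_smul_one [DecidableEq n] (c : R) :
    trace ((c • 1 : Matrix n n R)ᵀ * (c • 1)) = c ^ 2 * Fintype.card n := by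
  rw [transpose_smul, transpose_one, smul_mul_smul_comm, Matrix.one_mul, trace_smul, trace_one,
    smul_eq_mul, sq]

end

theorem matrix_self_improvement_sharp_general (n : ℕ) (N : ℝ) (hN : (n : ℝ) < N)
    (d : ℝ) (H : Matrix (Fin n) (Fin n) ℝ) :
    let M : Matrix (Fin n) (Fin n) ℝ :=
      H + ((trace H - d) / (N - (n : ℝ))) • (1 : Matrix (Fin n) (Fin n) ℝ)
    2 * trace (Mᵀ * H) - trace (Mᵀ * M) + (d - trace M) ^ 2 / N =
      trace (Hᵀ * H) + (trace H - d) ^ 2 / (N - (n : ℝ)) := by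
  intro M
  set c := (trace H - d) / (N - n)
  have hNn : N - n ≠ 0 := sub_ne_zero.2 hN.ne'
  have hN0 : N ≠ 0 := (lt_of_le_of_lt n.cast_nonneg hN).ne'
  have hshift : M - H = c • 1 := add_sub_cancel_left H _
  have hc : c * (N - n) = trace H - d := div_mul_cancel₀ _ hNn
  have htrace : d - trace M = -(c * N) := by
    simp only [M, trace_add, trace_smul, trace_one, Fintype.card_fin, smul_eq_mul]
    linear_combination hc
  rw [two_mul_trace_transpose_mul_sub_trace_transpose_mul, hshift, trace_transpose_mul_smul_one,
    Fintype.card_fin, htrace, ← hc]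
  field_simp
  ring

/-- **Sharpness of the matrix self-improvement inequality.** For an `n × n` real
matrix `H` (`n ≥ 1`), a real `N > n` and a real `d`, the choice
`M = H + ((tr H − d)/(N − n)) I` attains equality:
`2 ⟨M, H⟩_F − ‖M‖_F² + (d − tr M)²/N = ‖H‖_F² + (tr H − d)²/(N − n)`. -/
theorem matrix_self_improvement_sharp (n : ℕ) (hn : 1 ≤ n) (N : ℝ) (hN : (n : ℝ) < N)
    (d : ℝ) (H : Matrix (Fin n) (Fin n) ℝ) :
    let M : Matrix (Fin n) (Fin n) ℝ :=
      H + ((trace H - d) / (N - (n : ℝ))) • (1 : Matrix (Fin n) (Fin n) ℝ)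
    2 * trace (Mᵀ * H) - trace (Mᵀ * M) + (d - trace M) ^ 2 / N =
      trace (Hᵀ * H) + (trace H - d) ^ 2 / (N - (n : ℝ)) :=
  matrix_self_improvement_sharp_general n N hN d H
end
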